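/- arXiv:1411.6185 — 3 statements merged into one kernel-verified Lean document; each statement's English description precedes it below -/
import Mathlib

section
/- Consider points p, r, s in ℝ² moving linearly: p(t) = (1-t)p₀ + t·p₁, r(t) = (1-t)r₀ + t·r₁, s(t) = (1-t)s₀ + t·s₁, where the displacement vectors p₁−p₀, r₁−r₀, s₁−s₀ are all parallel to a common direction ℓ ∈ ℝ², ℓ ≠ 0. If p₀ is strictly to the right of the oriented line through r₀, s₀ (i.e., the cross product (s₀−r₀) × (p₀−r₀) < 0) and p₁ is strictly to the right of the oriented line through r₁, s₁, then for all t ∈ [0,1], p(t) is strictly to the right of the oriented line through r(t), s(t). -/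
/-- Cross product of two planar vectors. -/
def cross (u v : ℝ × ℝ) : ℝ := u.1 * v.2 - u.2 * v.1

theorem right_of_line_preserved
    (p0 p1 r0 r1 s0 s1 l : ℝ × ℝ) (hl : l ≠ 0)
    (hp : ∃ k : ℝ, p1 - p0 = k • l)
    (hr : ∃ k : ℝ, r1 - r0 = k • l)
    (hs : ∃ k : ℝ, s1 - s0 = k • l)
    (h0 : cross (s0 - r0) (p0 - r0) < 0)
    (h1 : cross (s1 - r1) (p1 - r1) < 0)
    (t : ℝ) (ht : t ∈ Set.Icc (0:ℝ) 1) :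
    cross (((1 - t) • s0 + t • s1) - ((1 - t) • r0 + t • r1))
          (((1 - t) • p0 + t • p1) - ((1 - t) • r0 + t • r1)) < 0 := by
  obtain ⟨a, hp⟩ := hp
  obtain ⟨b, hr⟩ := hr
  obtain ⟨c, hs⟩ := hs
  obtain ⟨ht0, ht1⟩ := ht
  have hp1 : p1.1 - p0.1 = a * l.1 := congrArg Prod.fst hp
  have hp2 : p1.2 - p0.2 = a * l.2 := congrArg Prod.snd hp
  have hr1 : r1.1 - r0.1 = b * l.1 := congrArg Prod.fst hr
  have hr2 : r1.2 - r0.2 = b * l.2 := congrArg Prod.snd hr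
  have hs1 : s1.1 - s0.1 = c * l.1 := congrArg Prod.fst hs
  have hs2 : s1.2 - s0.2 = c * l.2 := congrArg Prod.snd hs
  have key : cross (((1 - t) • s0 + t • s1) - ((1 - t) • r0 + t • r1))
          (((1 - t) • p0 + t • p1) - ((1 - t) • r0 + t • r1))
      = (1 - t) * cross (s0 - r0) (p0 - r0) + t * cross (s1 - r1) (p1 - r1) := by
    have ep1 : p1.1 = p0.1 + a * l.1 := by linarith
    have ep2 : p1.2 = p0.2 + a * l.2 := by linarith
    have er1 : r1.1 = r0.1 + b * l.1 := by linarith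
    have er2 : r1.2 = r0.2 + b * l.2 := by linarith
    have es1 : s1.1 = s0.1 + c * l.1 := by linarith
    have es2 : s1.2 = s0.2 + c * l.2 := by linarith
    simp only [cross, Prod.fst_sub, Prod.snd_sub, Prod.fst_add, Prod.snd_add,
      Prod.smul_fst, Prod.smul_snd, smul_eq_mul, ep1, ep2, er1, er2, es1, es2]
    ring
  rw [key]
  rcases le_total (cross (s0 - r0) (p0 - r0)) (cross (s1 - r1) (p1 - r1)) with h | h <;>
    nlinarith
end

section
/- Let p, r, s be points in ℝ² moving linearly during t ∈ [0,1], with all displacement vectors parallel to a common nonzero direction ℓ. If p lies on the same side (both strictly left or both strictly right) of the oriented line through r and s at times t = 0 and t = 1, and r(t) ≠ s(t) for all t, then p(t) lies strictly on that same side of the line through r(t) and s(t) for every t ∈ [0,1]. -/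
theorem same_side_preserved
    (p0 r0 s0 l : ℝ × ℝ) (hl : l ≠ 0) (kp kr ks : ℝ)
    (p r s : ℝ → ℝ × ℝ)
    (hp : ∀ t, p t = p0 + t • kp • l)
    (hr : ∀ t, r t = r0 + t • kr • l)
    (hs : ∀ t, s t = s0 + t • ks • l)
    (hrs : ∀ t ∈ Set.Icc (0:ℝ) 1, r t ≠ s t)
    (hside : (0 < cross (s 0 - r 0) (p 0 - r 0) ∧ 0 < cross (s 1 - r 1) (p 1 - r 1)) ∨
             (cross (s 0 - r 0) (p 0 - r 0) < 0 ∧ cross (s 1 - r 1) (p 1 - r 1) < 0)) :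
    ∀ t ∈ Set.Icc (0:ℝ) 1,
      (0 < cross (s 0 - r 0) (p 0 - r 0) → 0 < cross (s t - r t) (p t - r t)) ∧
      (cross (s 0 - r 0) (p 0 - r 0) < 0 → cross (s t - r t) (p t - r t) < 0) := by
  have key : ∀ t : ℝ, cross (s t - r t) (p t - r t) =
      (1 - t) * cross (s 0 - r 0) (p 0 - r 0) + t * cross (s 1 - r 1) (p 1 - r 1) := by
    intro t
    simp only [hp, hr, hs, cross, Prod.fst_add, Prod.snd_add, Prod.fst_sub, Prod.snd_sub,
      Prod.smul_fst, Prod.smul_snd, smul_eq_mul]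
    ring
  intro t ht
  obtain ⟨ht0, ht1⟩ := ht
  rw [key t]
  constructor
  · intro h0
    rcases hside with ⟨h0', h1⟩ | ⟨h0', h1⟩
    · rcases ht0.eq_or_lt with rfl | htpos
      · simpa using h0
      · nlinarith [mul_pos htpos h1, mul_nonneg (sub_nonneg.2 ht1) h0.le]
    · linarith
  · intro h0
    rcases hside with ⟨h0', h1⟩ | ⟨h0', h1⟩
    · linarith
    · rcases ht0.eq_or_lt with rfl | htpos
      · simpa using h0
      · nlinarith [mul_pos htpos (neg_pos.2 h1), mul_nonneg (sub_nonneg.2 ht1) (neg_nonneg.2 h0.le)]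
end

section
/- Let a, b, c ∈ ℝ² be affinely independent, and suppose each moves linearly in a common direction ℓ: a(t) = a + t·k₁ℓ, etc. Suppose also that a(1), b(1), c(1) are affinely independent with the same orientation (sign of (b−a) × (c−a)) as at t = 0. Then a(t), b(t), c(t) are affinely independent for all t ∈ [0,1]; i.e., the triangle never degenerates during the unidirectional morph. -/
theorem triangle_never_degenerates
    (a b c l : ℝ × ℝ) (hl : l ≠ 0) (k1 k2 k3 : ℝ)
    (A B C : ℝ → ℝ × ℝ)
    (hA : ∀ t, A t = a + t • k1 • l)
    (hB : ∀ t, B t = b + t • k2 • l)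
    (hC : ∀ t, C t = c + t • k3 • l)
    (h0 : cross (b - a) (c - a) ≠ 0)
    (h1 : 0 < cross (b - a) (c - a) * cross (B 1 - A 1) (C 1 - A 1)) :
    ∀ t ∈ Set.Icc (0:ℝ) 1, cross (B t - A t) (C t - A t) ≠ 0 := by
  have key : ∀ s : ℝ, cross (B s - A s) (C s - A s)
      = (1 - s) * cross (b - a) (c - a) + s * cross (B 1 - A 1) (C 1 - A 1) := by
    intro s
    simp only [hA, hB, hC, cross, Prod.fst_sub, Prod.snd_sub, Prod.fst_add, Prod.snd_add,
      Prod.smul_fst, Prod.smul_snd, smul_eq_mul]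
    ring
  intro t ht hzero
  rw [key t] at hzero
  rcases ht with ⟨ht0, ht1⟩
  set x := cross (b - a) (c - a)
  set y := cross (B 1 - A 1) (C 1 - A 1)
  have h2 : ((1 - t) * x + t * y) * x = 0 := by rw [hzero]; ring
  have h3 : ((1 - t) * x + t * y) * y = 0 := by rw [hzero]; ring
  nlinarith [h2, h3, h1, mul_nonneg (by linarith : (0:ℝ) ≤ 1 - t) (mul_self_nonneg x),
    mul_nonneg ht0 (mul_self_nonneg y)]
end
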